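/- Let f ∈ FM^{(g,l)}_k be a symmetric formal Fourier-Jacobi series of genus g and cogenus l (1 < l < g, scalar weight k). Then the zeroth formal Fourier-Jacobi coefficient ψ₀ (of cogenus-(l−1) refinement with l' = 1) does not depend on the variable z₁₂ and is a symmetric formal Fourier-Jacobi series of genus g−1 and cogenus l−1 and weight k. -/

import Mathlib

/-!
STATEMENT 18: Let f ∈ FM^{(g,l)}_k be a symmetric formal Fourier-Jacobi series of
genus g and cogenus l (1 < l < g, scalar weight k).  Then the zeroth formal
Fourier-Jacobi coefficient ψ₀ (of the cogenus-1 refinement with l' = 1) does not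
depend on the variable z₁₂ and is a symmetric formal Fourier-Jacobi series of
genus g−1, cogenus l−1 and weight k.

A symmetric formal Fourier-Jacobi series is encoded by its family of formal
Fourier coefficients (see `IsSymFM`).  Here the genus is g = h + (l2 + 2) with
h = g − l ≥ 1 and cogenus l = l2 + 2 ≥ 2.  In this encoding:
* ψ₀ is encoded by the coefficient family t' ↦ c (t' 0; 0 0) on matrices of size
  g − 1 = h + (l2 + 1);
* the independence of ψ₀ from z₁₂ amounts to the vanishing of all coefficients
  c(t) whose bottom-right diagonal entry is 0 but whose last column is nonzero.
-/

noncomputable section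
open Complex Matrix

attribute [local instance] Matrix.normedAddCommGroup Matrix.normedSpace

/-- Square complex matrices of size `g`. -/
abbrev MatC (g : ℕ) := Matrix (Fin g) (Fin g) ℂ
/-- Square rational matrices of size `g`. -/
abbrev MatQ (g : ℕ) := Matrix (Fin g) (Fin g) ℚ

/-- The Siegel upper half space of genus `g`: symmetric complex matrices with
positive definite imaginary part. -/
def Sieg (g : ℕ) : Set (MatC g) :=
  {τ | τ.IsSymm ∧ (τ.map Complex.im).PosDef}

/-- The standard symplectic form. -/
def sympJ (g : ℕ) : Matrix (Fin g ⊕ Fin g) (Fin g ⊕ Fin g) ℤ :=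
  Matrix.fromBlocks 0 1 (-1) 0

/-- The integral symplectic group `Sp_{2g}(ℤ)` (as a set of integral matrices). -/
def SpZ (g : ℕ) : Set (Matrix (Fin g ⊕ Fin g) (Fin g ⊕ Fin g) ℤ) :=
  {γ | γᵀ * sympJ g * γ = sympJ g}

variable {g : ℕ}

/-- Block `a` of a symplectic matrix, as a complex matrix. -/
def blkA (γ : Matrix (Fin g ⊕ Fin g) (Fin g ⊕ Fin g) ℤ) : MatC g :=
  Matrix.of fun i j => ((γ (Sum.inl i) (Sum.inl j) : ℤ) : ℂ)
/-- Block `b`. -/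
def blkB (γ : Matrix (Fin g ⊕ Fin g) (Fin g ⊕ Fin g) ℤ) : MatC g :=
  Matrix.of fun i j => ((γ (Sum.inl i) (Sum.inr j) : ℤ) : ℂ)
/-- Block `c`. -/
def blkC (γ : Matrix (Fin g ⊕ Fin g) (Fin g ⊕ Fin g) ℤ) : MatC g :=
  Matrix.of fun i j => ((γ (Sum.inr i) (Sum.inl j) : ℤ) : ℂ)
/-- Block `d`. -/
def blkD (γ : Matrix (Fin g ⊕ Fin g) (Fin g ⊕ Fin g) ℤ) : MatC g :=
  Matrix.of fun i j => ((γ (Sum.inr i) (Sum.inr j) : ℤ) : ℂ)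

/-- The matrix `c τ + d`. -/
def jmat (γ : Matrix (Fin g ⊕ Fin g) (Fin g ⊕ Fin g) ℤ) (τ : MatC g) : MatC g :=
  blkC γ * τ + blkD γ

/-- The factor of automorphy `det (c τ + d)`. -/
def jden (γ : Matrix (Fin g ⊕ Fin g) (Fin g ⊕ Fin g) ℤ) (τ : MatC g) : ℂ :=
  (jmat γ τ).det

/-- The action `τ ↦ (a τ + b)(c τ + d)⁻¹` of `Sp_{2g}` on the Siegel upper half
space. -/
def actSp (γ : Matrix (Fin g ⊕ Fin g) (Fin g ⊕ Fin g) ℤ) (τ : MatC g) : MatC g :=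
  (blkA γ * τ + blkB γ) * (jmat γ τ)⁻¹

/-- A rational symmetric matrix is half-integral if its off-diagonal entries lie in
`½ℤ` and its diagonal entries are integers. -/
def HalfIntegral (t : MatQ g) : Prop :=
  t.IsSymm ∧ (∀ i j, ∃ z : ℤ, 2 * t i j = z) ∧ (∀ i, ∃ z : ℤ, t i i = z)

/-- Positive semi-definiteness for rational symmetric matrices. -/
def PosSemidefQ (t : MatQ g) : Prop :=
  ∀ v : Fin g → ℚ, 0 ≤ v ⬝ᵥ t.mulVec v

/-- `t` represents the rational number `q` if `q = ᵀv t v` for some `v ∈ ℤ^g`. -/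
def RepresentsQ (t : MatQ g) (q : ℚ) : Prop :=
  ∃ v : Fin g → ℤ, (fun i => (v i : ℚ)) ⬝ᵥ t.mulVec (fun i => (v i : ℚ)) = q

/-- `e(tτ) = exp(2πi · tr(tτ))`. -/
def eMat (t : MatQ g) (τ : MatC g) : ℂ :=
  Complex.exp (2 * (Real.pi : ℂ) * Complex.I * ((t.map fun q => (q : ℂ)) * τ).trace)

/-- A (scalar-valued, classical) Siegel modular form of genus `g` and weight `k`
for the full symplectic group `Sp_{2g}(ℤ)`, bundled with its Fourier expansion:
a holomorphic function on the Siegel upper half space transforming with the factor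
of automorphy `det(cτ+d)^k`, whose Fourier expansion is supported on half-integral
positive semi-definite matrices. -/
structure SiegelMF (g : ℕ) (k : ℤ) where
  toFun : MatC g → ℂ
  coeff : MatQ g → ℂ
  holo : DifferentiableOn ℂ toFun (Sieg g)
  transf : ∀ γ ∈ SpZ g, ∀ τ ∈ Sieg g, toFun (actSp γ τ) = jden γ τ ^ k * toFun τ
  supp : ∀ t, coeff t ≠ 0 → HalfIntegral t ∧ PosSemidefQ t
  expansion : ∀ τ ∈ Sieg g, HasSum (fun t => coeff t * eMat t τ) (toFun τ)

/-- A Siegel modular form is nonzero if it is nonzero somewhere on the Siegel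
upper half space. -/
def SiegelMF.Nonzero {k : ℤ} (f : SiegelMF g k) : Prop :=
  ∃ τ ∈ Sieg g, f.toFun τ ≠ 0

/-- The vanishing order of a Siegel modular form: the infimum of all rationals
represented by some index matrix `t` with nonvanishing Fourier coefficient. -/
def SiegelMF.ord {k : ℤ} (f : SiegelMF g k) : ℝ :=
  sInf {r : ℝ | ∃ t q, f.coeff t ≠ 0 ∧ RepresentsQ t q ∧ (q : ℝ) = r}


/-- `Mat_{h,l}(ℂ)`. -/
abbrev MatRC (h l : ℕ) := Matrix (Fin h) (Fin l) ℂ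
/-- `Mat_{h,l}(ℚ)`. -/
abbrev MatRQ (h l : ℕ) := Matrix (Fin h) (Fin l) ℚ

/-- The block matrix `(n, r/2; ᵀr/2, m)` of size `h + l`. -/
def blkQ (h l : ℕ) (n : MatQ h) (r : MatRQ h l) (m : MatQ l) : MatQ (h + l) :=
  Matrix.reindex finSumFinEquiv finSumFinEquiv
    (Matrix.fromBlocks n ((1 / 2 : ℚ) • r) ((1 / 2 : ℚ) • rᵀ) m)

/-- A (Siegel-) Jacobi form of genus `h`, cogenus `l`, weight `k` and (matrix)
index `m`, bundled with its Fourier expansion: a holomorphic function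
`φ(τ, z)` on `ℍ_h × Mat_{h,l}(ℂ)` satisfying the transformation laws of Jacobi
forms under `Sp_{2h}(ℤ)` and under the lattice translations
`z ↦ z + τλ + μ`, whose Fourier coefficients `c(φ; n, r)` are supported on pairs
for which the block matrix `(n, r/2; ᵀr/2, m)` is half-integral positive
semi-definite. -/
structure JacobiF (h l : ℕ) (k : ℤ) (m : MatQ l) where
  toFun : MatC h × MatRC h l → ℂ
  coeff : MatQ h × MatRQ h l → ℂ
  holo : DifferentiableOn ℂ toFun (Sieg h ×ˢ (Set.univ : Set (MatRC h l)))
  transfSp : ∀ γ ∈ SpZ h, ∀ p : MatC h × MatRC h l, p.1 ∈ Sieg h →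
    toFun (actSp γ p.1, ((jmat γ p.1)⁻¹)ᵀ * p.2)
      = jden γ p.1 ^ k *
        Complex.exp (2 * (Real.pi : ℂ) * Complex.I *
          ((m.map fun q => (q : ℂ)) *
            (p.2ᵀ * ((jmat γ p.1)⁻¹ * (blkC γ * p.2)))).trace) *
        toFun p
  transfEll : ∀ lam mu : Matrix (Fin h) (Fin l) ℤ, ∀ p : MatC h × MatRC h l,
    p.1 ∈ Sieg h →
    toFun (p.1, p.2 + p.1 * (lam.map fun z => (z : ℂ)) + (mu.map fun z => (z : ℂ)))
      = Complex.exp (-(2 * (Real.pi : ℂ) * Complex.I) *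
          ((m.map fun q => (q : ℂ)) *
            ((lam.map fun z => (z : ℂ))ᵀ * p.1 * (lam.map fun z => (z : ℂ))
              + (2 : ℂ) • ((lam.map fun z => (z : ℂ))ᵀ * p.2))).trace) *
        toFun p
  supp : ∀ nr : MatQ h × MatRQ h l, coeff nr ≠ 0 →
    HalfIntegral (blkQ h l nr.1 nr.2 m) ∧ PosSemidefQ (blkQ h l nr.1 nr.2 m)
  expansion : ∀ p : MatC h × MatRC h l, p.1 ∈ Sieg h →
    HasSum (fun nr : MatQ h × MatRQ h l => coeff nr *
      Complex.exp (2 * (Real.pi : ℂ) * Complex.I *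
        (((nr.1.map fun q => (q : ℂ)) * p.1).trace
          + ((nr.2.map fun q => (q : ℂ))ᵀ * p.2).trace)))
      (toFun p)

/-- The index-`m` Fourier-Jacobi slice of a genus-`(h+l)` family of Fourier
coefficients: `(n, r) ↦ c (n, r/2; ᵀr/2, m)`. -/
def sliceCoeff (h l : ℕ) (c : MatQ (h + l) → ℂ) (m : MatQ l) :
    MatQ h × MatRQ h l → ℂ :=
  fun nr => c (blkQ h l nr.1 nr.2 m)

/-- `c` is (the family of formal Fourier coefficients of) a symmetric formal
Fourier-Jacobi series of genus `h + l`, cogenus `l` and weight `k`: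
the coefficients are supported on half-integral positive semi-definite matrices,
they satisfy the `GL_{h+l}(ℤ)`-symmetry `c(t) = det(u)^k·c(ᵀu t u)`, and for every
half-integral positive semi-definite index `m` the `m`-th Fourier-Jacobi slice of
`c` is the system of Fourier coefficients of a (convergent, holomorphic) Jacobi
form of genus `h`, weight `k` and index `m`. -/
def IsSymFM (h l : ℕ) (k : ℤ) (c : MatQ (h + l) → ℂ) : Prop :=
  (∀ t, c t ≠ 0 → HalfIntegral t ∧ PosSemidefQ t) ∧
  (∀ u : Matrix (Fin (h + l)) (Fin (h + l)) ℤ, IsUnit u.det → ∀ t,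
    c t = ((u.det : ℚ) : ℂ) ^ k *
      c ((u.map fun z => (z : ℚ))ᵀ * t * (u.map fun z => (z : ℚ)))) ∧
  (∀ m : MatQ l, HalfIntegral m → PosSemidefQ m →
    ∃ φ : JacobiF h l k m, φ.coeff = sliceCoeff h l c m)

/-- The convolution (Cauchy) product of two families of Fourier coefficients,
corresponding to the product of the associated (formal) series. -/
noncomputable def convC {g : ℕ} (c c' : MatQ g → ℂ) : MatQ g → ℂ :=
  fun t => ∑ᶠ s : MatQ g, c s * c' (t - s)

/-- Convolution powers `c^i`; `c^0` is the coefficient family of the constant `1`. -/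
noncomputable def powC {g : ℕ} (c : MatQ g → ℂ) : ℕ → (MatQ g → ℂ)
  | 0 => fun t => if t = 0 then 1 else 0
  | i + 1 => convC c (powC c i)

/-- The embedding `t' ↦ (t' 0; 0 0)` of matrices of size `g-1` into matrices of
size `g`. -/
def extendByZero (h l2 : ℕ) (t' : MatQ (h + (l2 + 1))) : MatQ (h + (l2 + 2)) :=
  Matrix.reindex (finSumFinEquiv.trans (finCongr (by omega)))
    (finSumFinEquiv.trans (finCongr (by omega)))
    (Matrix.fromBlocks t' 0 0 (0 : Matrix (Fin 1) (Fin 1) ℚ))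


lemma finSumFinEquiv_symm_dichotomy {m n : ℕ} (i : Fin (m + n)) :
    finSumFinEquiv.symm i =
      if h : (i : ℕ) < m then Sum.inl ⟨i.1, h⟩ else Sum.inr ⟨i.1 - m, by omega⟩ := by
  split_ifs with h
  · have : i = Fin.castAdd n ⟨i.1, h⟩ := Fin.ext rfl
    exact (congrArg finSumFinEquiv.symm this).trans (finSumFinEquiv_symm_apply_castAdd _)
  · have : i = Fin.natAdd m ⟨i.1 - m, by omega⟩ := Fin.ext (by simp; omega)
    exact (congrArg finSumFinEquiv.symm this).trans (finSumFinEquiv_symm_apply_natAdd _)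

/-- append a zero column -/
def appZ {α : Type*} [Zero α] {h l : ℕ} (z : Matrix (Fin h) (Fin l) α) :
    Matrix (Fin h) (Fin (l + 1)) α :=
  Matrix.of fun i j => if hj : (j : ℕ) < l then z i ⟨j, hj⟩ else 0

/-- extend a square matrix by a zero row and column -/
def extSq {α : Type*} [Zero α] {l : ℕ} (m : Matrix (Fin l) (Fin l) α) :
    Matrix (Fin (l + 1)) (Fin (l + 1)) α :=
  Matrix.of fun i j =>
    if hi : (i : ℕ) < l then (if hj : (j : ℕ) < l then m ⟨i, hi⟩ ⟨j, hj⟩ else 0) else 0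

@[simp] lemma appZ_castSucc {α : Type*} [Zero α] {h l : ℕ}
    (z : Matrix (Fin h) (Fin l) α) (i : Fin h) (j : Fin l) :
    appZ z i j.castSucc = z i j := by
  simp [appZ]

@[simp] lemma appZ_last {α : Type*} [Zero α] {h l : ℕ}
    (z : Matrix (Fin h) (Fin l) α) (i : Fin h) :
    appZ z i (Fin.last l) = 0 := by
  simp [appZ]

@[simp] lemma extSq_castSucc {α : Type*} [Zero α] {l : ℕ}
    (m : Matrix (Fin l) (Fin l) α) (i j : Fin l) :
    extSq m i.castSucc j.castSucc = m i j := by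
  simp [extSq]

@[simp] lemma extSq_last_left {α : Type*} [Zero α] {l : ℕ}
    (m : Matrix (Fin l) (Fin l) α) (j : Fin (l + 1)) :
    extSq m (Fin.last l) j = 0 := by
  simp [extSq]

@[simp] lemma extSq_last_right {α : Type*} [Zero α] {l : ℕ}
    (m : Matrix (Fin l) (Fin l) α) (i : Fin (l + 1)) :
    extSq m i (Fin.last l) = 0 := by
  simp [extSq]

lemma appZ_add {α : Type*} [AddZeroClass α] {h l : ℕ}
    (x y : Matrix (Fin h) (Fin l) α) : appZ (x + y) = appZ x + appZ y := by
  ext i j; by_cases hj : (j : ℕ) < l <;> simp [appZ, hj]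

lemma appZ_map {α β : Type*} [Zero α] [Zero β] {h l : ℕ}
    (z : Matrix (Fin h) (Fin l) α) (f : α → β) (hf : f 0 = 0) :
    (appZ z).map f = appZ (z.map f) := by
  ext i j; by_cases hj : (j : ℕ) < l <;> simp [appZ, hj, hf]

lemma extSq_map {α β : Type*} [Zero α] [Zero β] {l : ℕ}
    (m : Matrix (Fin l) (Fin l) α) (f : α → β) (hf : f 0 = 0) :
    (extSq m).map f = extSq (m.map f) := by
  ext i j
  by_cases hi : (i : ℕ) < l <;> by_cases hj : (j : ℕ) < l <;> simp [extSq, hi, hj, hf]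

lemma mul_appZ {α : Type*} [NonUnitalNonAssocSemiring α] [Fintype.{0} (Fin 0)] {a h l : ℕ}
    (M : Matrix (Fin a) (Fin h) α) (z : Matrix (Fin h) (Fin l) α) :
    M * appZ z = appZ (M * z) := by
  ext i j
  by_cases hj : (j : ℕ) < l <;> simp [appZ, Matrix.mul_apply, hj]

lemma appZ_smul {h l : ℕ} (a : ℂ) (z : Matrix (Fin h) (Fin l) ℂ) :
    appZ (a • z) = a • appZ z := by
  ext i j; by_cases hj : (j : ℕ) < l <;> simp [appZ, hj]

lemma appZ_injective {α : Type*} [Zero α] {h l : ℕ} :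
    Function.Injective (appZ : Matrix (Fin h) (Fin l) α → _) := by
  intro x y hxy
  ext i j
  have := congrFun (congrFun hxy i) j.castSucc
  simpa using this

lemma submatrix_appZT_mul_appZ {α : Type*} [NonUnitalNonAssocSemiring α] {h l : ℕ}
    (a b : Matrix (Fin h) (Fin l) α) :
    ((appZ a)ᵀ * appZ b).submatrix Fin.castSucc Fin.castSucc = aᵀ * b := by
  ext j i
  simp [Matrix.mul_apply]

lemma trace_extSq_mul {α : Type*} [NonUnitalNonAssocSemiring α] {l : ℕ}
    (A : Matrix (Fin l) (Fin l) α) (W : Matrix (Fin (l + 1)) (Fin (l + 1)) α) :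
    (extSq A * W).trace = (A * W.submatrix Fin.castSucc Fin.castSucc).trace := by
  rw [Matrix.trace, Matrix.trace]
  rw [Fin.sum_univ_castSucc]
  have hlast : (extSq A * W).diag (Fin.last l) = 0 := by
    simp [Matrix.diag, Matrix.mul_apply]
  rw [hlast, add_zero]
  refine Finset.sum_congr rfl fun i _ => ?_
  simp only [Matrix.diag, Matrix.mul_apply]
  rw [Fin.sum_univ_castSucc]
  simp


lemma blkQ_apply (h l : ℕ) (n : MatQ h) (r : MatRQ h l) (m : MatQ l)
    (i j : Fin (h + l)) :
    blkQ h l n r m i j =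
      if hi : (i : ℕ) < h then
        (if hj : (j : ℕ) < h then n ⟨i.1, hi⟩ ⟨j.1, hj⟩
         else (1 / 2 : ℚ) * r ⟨i.1, hi⟩ ⟨j.1 - h, by omega⟩)
      else
        (if hj : (j : ℕ) < h then (1 / 2 : ℚ) * r ⟨j.1, hj⟩ ⟨i.1 - h, by omega⟩
         else m ⟨i.1 - h, by omega⟩ ⟨j.1 - h, by omega⟩) := by
  rw [blkQ, Matrix.reindex_apply, Matrix.submatrix_apply,
    finSumFinEquiv_symm_dichotomy, finSumFinEquiv_symm_dichotomy]
  by_cases hi : (i : ℕ) < h <;> by_cases hj : (j : ℕ) < h <;>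
    simp [hi, hj, Matrix.fromBlocks]

lemma extendByZero_apply (h l2 : ℕ) (t : MatQ (h + (l2 + 1))) (i j : Fin (h + (l2 + 2))) :
    extendByZero h l2 t i j =
      if hi : (i : ℕ) < h + (l2 + 1) then
        (if hj : (j : ℕ) < h + (l2 + 1) then t ⟨i.1, hi⟩ ⟨j.1, hj⟩ else 0)
      else 0 := by
  rw [extendByZero, Matrix.reindex_apply, Matrix.submatrix_apply]
  have e1 : ((finSumFinEquiv.trans (finCongr (by omega :
      (h + (l2 + 1)) + 1 = h + (l2 + 2)))).symm :
      Fin (h + (l2 + 2)) ≃ Fin (h + (l2 + 1)) ⊕ Fin 1) i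
      = finSumFinEquiv.symm (Fin.cast (by omega) i) := rfl
  have e2 : ((finSumFinEquiv.trans (finCongr (by omega :
      (h + (l2 + 1)) + 1 = h + (l2 + 2)))).symm :
      Fin (h + (l2 + 2)) ≃ Fin (h + (l2 + 1)) ⊕ Fin 1) j
      = finSumFinEquiv.symm (Fin.cast (by omega) j) := rfl
  rw [e1, e2, finSumFinEquiv_symm_dichotomy, finSumFinEquiv_symm_dichotomy]
  by_cases hi : (i : ℕ) < h + (l2 + 1) <;> by_cases hj : (j : ℕ) < h + (l2 + 1) <;>
    simp [hi, hj, Matrix.fromBlocks]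

/-- key compatibility: extending the Jacobi index by a zero block -/
lemma blkQ_appZ_extSq (h l2 : ℕ) (n : MatQ h) (r : MatRQ h (l2 + 1)) (m : MatQ (l2 + 1)) :
    blkQ h (l2 + 2) n (appZ r) (extSq m) = extendByZero h l2 (blkQ h (l2 + 1) n r m) := by
  ext i j
  simp only [blkQ_apply, extendByZero_apply, appZ, extSq, Matrix.of_apply]
  split_ifs <;> first | rfl | omega | ring

/-- a PSD matrix with vanishing lower-right corner has vanishing last column -/
lemma col_zero {N : ℕ} (t : MatQ (N + 1)) (hs : t.IsSymm) (hp : PosSemidefQ t)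
    (h0 : t (Fin.last N) (Fin.last N) = 0) (i : Fin (N + 1)) : t i (Fin.last N) = 0 := by
  by_cases hi : i = Fin.last N
  · rw [hi]; exact h0
  set d := t i i with hd'
  set cc := t i (Fin.last N) with hc'
  have hd : 0 ≤ d := by
    have := hp (Pi.single i 1)
    simpa [Matrix.mulVec_single, single_dotProduct] using this
  have hsym : t (Fin.last N) i = cc := hs.apply i (Fin.last N)
  have key : ∀ a : ℚ, 0 ≤ d * (a * a) + (2 * cc) * a + 0 := by
    intro a
    have hval := hp (fun j => a * (if j = i then (1:ℚ) else 0) +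
      (if j = Fin.last N then (1:ℚ) else 0))
    simp only [dotProduct, Matrix.mulVec, mul_add, add_mul, mul_ite, ite_mul,
      mul_one, mul_zero, one_mul, zero_mul, Finset.sum_add_distrib, Finset.sum_ite_eq,
      Finset.sum_ite_eq', Finset.mem_univ, if_true, ← Finset.mul_sum] at hval
    rw [hsym, h0, ← hd', ← hc'] at hval
    nlinarith [hval]
  have hdis := discrim_le_zero key
  rw [discrim] at hdis
  have h2 : cc * cc ≤ 0 := by nlinarith [hdis]
  exact mul_self_eq_zero.mp (le_antisymm h2 (mul_self_nonneg cc))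

lemma psd_restrict {N : ℕ} (t : MatQ (N + 1)) (hp : PosSemidefQ t) :
    PosSemidefQ (t.submatrix Fin.castSucc Fin.castSucc) := by
  intro v
  have := hp (Fin.snoc v 0)
  have e : (Fin.snoc v 0 : Fin (N+1) → ℚ) ⬝ᵥ t.mulVec (Fin.snoc v 0)
      = v ⬝ᵥ (t.submatrix Fin.castSucc Fin.castSucc).mulVec v := by
    rw [dotProduct, dotProduct, Fin.sum_univ_castSucc]
    simp only [Fin.snoc_last, Fin.snoc_castSucc, zero_mul, add_zero]
    refine Finset.sum_congr rfl fun i _ => ?_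
    congr 1
    rw [Matrix.mulVec, Matrix.mulVec, dotProduct, dotProduct,
      Fin.sum_univ_castSucc]
    simp [Fin.snoc_castSucc, Fin.snoc_last]
  rw [e] at this
  exact this

lemma halfint_restrict {N : ℕ} (t : MatQ (N + 1)) (ht : HalfIntegral t) :
    HalfIntegral (t.submatrix Fin.castSucc Fin.castSucc) := by
  obtain ⟨hs, h2, h1⟩ := ht
  refine ⟨?_, fun i j => h2 _ _, fun i => h1 _⟩
  ext i j
  exact hs.apply _ _

lemma psd_extSq {l : ℕ} (m : MatQ l) (hp : PosSemidefQ m) : PosSemidefQ (extSq m) := by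
  intro v
  have e : v ⬝ᵥ (extSq m).mulVec v
      = (fun i => v i.castSucc) ⬝ᵥ m.mulVec (fun i => v i.castSucc) := by
    rw [dotProduct, dotProduct, Fin.sum_univ_castSucc]
    have hlast : (extSq m).mulVec v (Fin.last l) = 0 := by
      simp [Matrix.mulVec, dotProduct]
    rw [hlast, mul_zero, add_zero]
    refine Finset.sum_congr rfl fun i _ => ?_
    congr 1
    rw [Matrix.mulVec, Matrix.mulVec, dotProduct, dotProduct,
      Fin.sum_univ_castSucc]
    simp
  rw [e]
  exact hp _

lemma halfint_extSq {l : ℕ} (m : MatQ l) (hm : HalfIntegral m) : HalfIntegral (extSq m) := by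
  obtain ⟨hs, h2, h1⟩ := hm
  refine ⟨?_, fun i j => ?_, fun i => ?_⟩
  · ext i j
    rcases Fin.eq_castSucc_or_eq_last i with ⟨i', rfl⟩ | rfl <;>
      rcases Fin.eq_castSucc_or_eq_last j with ⟨j', rfl⟩ | rfl <;>
      simp [Matrix.transpose_apply]
    exact hs.apply i' j'
  · rcases Fin.eq_castSucc_or_eq_last i with ⟨i', rfl⟩ | rfl <;>
      rcases Fin.eq_castSucc_or_eq_last j with ⟨j', rfl⟩ | rfl <;>
      simp
    · exact h2 i' j'
    all_goals exact ⟨0, by simp⟩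
  · rcases Fin.eq_castSucc_or_eq_last i with ⟨i', rfl⟩ | rfl <;> simp
    · exact h1 i'
    · exact ⟨0, by simp⟩

lemma reindex_mul {p q : Type*} [Fintype p] [Fintype q] [DecidableEq p] [DecidableEq q]
    (e : p ≃ q) (X Y : Matrix p p ℚ) :
    (Matrix.reindex e e X) * (Matrix.reindex e e Y) = Matrix.reindex e e (X * Y) := by
  simp [Matrix.reindex_apply, Matrix.submatrix_mul_equiv]

lemma extendByZero_submatrix (h l2 : ℕ) (t : MatQ (h + (l2 + 1))) :
    (extendByZero h l2 t).submatrix Fin.castSucc Fin.castSucc = t := by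
  ext i j
  rw [Matrix.submatrix_apply]
  have hE := extendByZero_apply h l2 t (Fin.castSucc i) (Fin.castSucc j)
  rw [hE]
  have hi : ((Fin.castSucc i : Fin (h + (l2 + 1) + 1)) : ℕ) < h + (l2 + 1) := i.isLt
  have hj : ((Fin.castSucc j : Fin (h + (l2 + 1) + 1)) : ℕ) < h + (l2 + 1) := j.isLt
  rw [dif_pos hi, dif_pos hj]
  congr 1 <;> exact Fin.ext rfl

lemma trace_appZT_mul_appZ {h l : ℕ} (a b : Matrix (Fin h) (Fin l) ℂ) :
    ((appZ a)ᵀ * appZ b).trace = (aᵀ * b).trace := by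
  rw [Matrix.trace, Matrix.trace, Fin.sum_univ_castSucc]
  have hl : ((appZ a)ᵀ * appZ b).diag (Fin.last l) = 0 := by
    simp [Matrix.diag, Matrix.mul_apply]
  rw [hl, add_zero]
  refine Finset.sum_congr rfl fun j _ => ?_
  simp [Matrix.diag, Matrix.mul_apply]

theorem zeroth_formal_FJ_coeff_of_symFM
    {h l2 : ℕ} (hh : 1 ≤ h) (k : ℤ)
    (c : MatQ (h + (l2 + 2)) → ℂ)
    (hc : IsSymFM h (l2 + 2) k c) :
    -- ψ₀ does not depend on z₁₂ :
    (∀ t : MatQ (h + (l2 + 2)), c t ≠ 0 →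
      t (Fin.last (h + (l2 + 1))) (Fin.last (h + (l2 + 1))) = 0 →
      ∀ i, t i (Fin.last (h + (l2 + 1))) = 0) ∧
    -- and ψ₀ is a symmetric formal Fourier-Jacobi series of genus g−1,
    -- cogenus l−1 and weight k :
    IsSymFM h (l2 + 1) k (fun t' => c (extendByZero h l2 t')) := by
  obtain ⟨hsupp, hGL, hFJ⟩ := hc
  constructor
  · intro t ht h0 i
    obtain ⟨hhi, hpsd⟩ := hsupp t ht
    exact col_zero (N := h + (l2 + 1)) t hhi.1 hpsd h0 i
  refine ⟨?_, ?_, ?_⟩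
  · -- support condition
    intro t' ht'
    obtain ⟨hhi, hpsd⟩ := hsupp _ ht'
    have e := extendByZero_submatrix h l2 t'
    exact ⟨e ▸ halfint_restrict _ hhi, e ▸ psd_restrict _ hpsd⟩
  · -- GL-symmetry
    intro u' hu' t'
    set e : (Fin (h + (l2 + 1)) ⊕ Fin 1) ≃ Fin (h + (l2 + 2)) :=
      finSumFinEquiv.trans (finCongr (by omega)) with he
    set u : Matrix (Fin (h + (l2 + 2))) (Fin (h + (l2 + 2))) ℤ :=
      Matrix.reindex e e (Matrix.fromBlocks u' 0 0 (1 : Matrix (Fin 1) (Fin 1) ℤ)) with hu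
    have hdet : u.det = u'.det := by
      rw [hu, Matrix.det_reindex_self, Matrix.det_fromBlocks_zero₂₁, Matrix.det_one, mul_one]
    have hunit : IsUnit u.det := hdet ▸ hu'
    have key := hGL u hunit (extendByZero h l2 t')
    have hmap : u.map (fun z => (z : ℚ)) =
        Matrix.reindex e e (Matrix.fromBlocks (u'.map fun z => (z : ℚ)) 0 0
          (1 : Matrix (Fin 1) (Fin 1) ℚ)) := by
      rw [hu, Matrix.reindex_apply, Matrix.reindex_apply, ← Matrix.submatrix_map,
        Matrix.fromBlocks_map]
      congr 1 <;> ext i j <;> simp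
    have hT : (u.map fun z => (z : ℚ))ᵀ =
        Matrix.reindex e e (Matrix.fromBlocks (u'.map fun z => (z : ℚ))ᵀ 0 0
          (1 : Matrix (Fin 1) (Fin 1) ℚ)) := by
      rw [hmap, Matrix.transpose_reindex, Matrix.fromBlocks_transpose]
      congr 1
      simp
    have hext : extendByZero h l2 t' =
        Matrix.reindex e e (Matrix.fromBlocks t' 0 0 (0 : Matrix (Fin 1) (Fin 1) ℚ)) := rfl
    have hidx : (u.map fun z => (z : ℚ))ᵀ * extendByZero h l2 t' * (u.map fun z => (z : ℚ))
        = extendByZero h l2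
            ((u'.map fun z => (z : ℚ))ᵀ * t' * (u'.map fun z => (z : ℚ))) := by
      have hext2 : extendByZero h l2 ((u'.map fun z => (z : ℚ))ᵀ * t' * (u'.map fun z => (z : ℚ)))
          = Matrix.reindex e e (Matrix.fromBlocks
              ((u'.map fun z => (z : ℚ))ᵀ * t' * (u'.map fun z => (z : ℚ))) 0 0 0) := rfl
      rw [hext2, hT, hmap, hext, reindex_mul, reindex_mul,
        Matrix.fromBlocks_multiply, Matrix.fromBlocks_multiply]
      congr 1 <;> simp [Matrix.mul_assoc]
    rw [hidx] at key
    rw [hdet] at key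
    exact key
  · -- Fourier-Jacobi coefficients come from honest Jacobi forms
    intro m hm hpm
    obtain ⟨φ, hφ⟩ := hFJ (extSq m) (halfint_extSq m hm) (psd_extSq m hpm)
    have hco : ∀ (n : MatQ h) (r : MatRQ h (l2 + 1)), φ.coeff (n, appZ r)
        = c (extendByZero h l2 (blkQ h (l2 + 1) n r m)) := by
      intro n r
      rw [hφ]
      show c (blkQ h (l2 + 2) n (appZ r) (extSq m)) = _
      rw [blkQ_appZ_extSq]
    have hvan : ∀ nr : MatQ h × MatRQ h (l2 + 2),
        (∃ i, nr.2 i (Fin.last (l2 + 1)) ≠ 0) → φ.coeff nr = 0 := by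
      rintro ⟨n, R⟩ ⟨i, hi⟩
      by_contra hne
      obtain ⟨hhi, hpsd⟩ := φ.supp (n, R) hne
      have h0 : blkQ h (l2 + 2) n R (extSq m)
          (Fin.last (h + (l2 + 1))) (Fin.last (h + (l2 + 1))) = 0 := by
        rw [blkQ_apply]
        rw [dif_neg (by simp only [Fin.val_last]; omega)]
        rw [dif_neg (by simp only [Fin.val_last]; omega)]
        simp only [extSq, Matrix.of_apply]
        rw [dif_neg (by simp only [Fin.val_last]; omega)]
      have hcol := col_zero (N := h + (l2 + 1)) _ hhi.1 hpsd h0 ⟨i.1, by omega⟩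
      rw [blkQ_apply] at hcol
      rw [dif_pos (show (i : ℕ) < h from i.isLt)] at hcol
      rw [dif_neg (by simp only [Fin.val_last]; omega)] at hcol
      apply hi
      have e1 : (⟨i.1, i.isLt⟩ : Fin h) = i := Fin.eta i i.isLt
      have e2 : (⟨((Fin.last (h + (l2 + 1)) : Fin (h + (l2 + 2))) : ℕ) - h, by omega⟩ :
          Fin (l2 + 2)) = Fin.last (l2 + 1) := Fin.ext (by simp [Fin.val_last])
      rw [e1, e2] at hcol
      linarith
    refine ⟨{ toFun := fun p => φ.toFun (p.1, appZ p.2),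
              coeff := sliceCoeff h (l2 + 1) (fun t' => c (extendByZero h l2 t')) m,
              holo := ?_, transfSp := ?_, transfEll := ?_, supp := ?_,
              expansion := ?_ }, rfl⟩
    · -- holomorphy
      have hdiff : Differentiable ℂ (fun p : MatC h × MatRC h (l2 + 1) =>
          ((p.1, appZ p.2) : MatC h × MatRC h (l2 + 2))) := by
        refine differentiable_fst.prodMk ?_
        let L : MatRC h (l2 + 1) →ₗ[ℂ] MatRC h (l2 + 2) :=
          { toFun := appZ, map_add' := appZ_add,
            map_smul' := fun a z => by simpa using appZ_smul a z }
        exact (LinearMap.toContinuousLinearMap L).differentiable.comp differentiable_snd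
      exact φ.holo.comp hdiff.differentiableOn (fun p hp => ⟨hp.1, trivial⟩)
    · -- symplectic transformation law
      intro γ hγ p hp
      have key := φ.transfSp γ hγ (p.1, appZ p.2) hp
      rw [mul_appZ] at key
      have etr : ((extSq m).map (fun q => (q : ℂ)) *
          ((appZ p.2)ᵀ * ((jmat γ p.1)⁻¹ * (blkC γ * appZ p.2)))).trace
          = (m.map (fun q => (q : ℂ)) *
              (p.2ᵀ * ((jmat γ p.1)⁻¹ * (blkC γ * p.2)))).trace := by
        rw [mul_appZ (blkC γ) p.2, mul_appZ ((jmat γ p.1)⁻¹) _,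
          extSq_map m _ (by norm_num), trace_extSq_mul, submatrix_appZT_mul_appZ]
      rw [etr] at key
      exact key
    · -- elliptic transformation law
      intro lam mu p hp
      have key := φ.transfEll (appZ lam) (appZ mu) (p.1, appZ p.2) hp
      have e1 : appZ p.2 + p.1 * ((appZ lam).map fun z => (z : ℂ))
            + ((appZ mu).map fun z => (z : ℂ))
          = appZ (p.2 + p.1 * (lam.map fun z => (z : ℂ)) + (mu.map fun z => (z : ℂ))) := by
        rw [appZ_map lam _ (by norm_num), appZ_map mu _ (by norm_num), mul_appZ,
          ← appZ_add, ← appZ_add]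
      rw [e1] at key
      have etr : ((extSq m).map (fun q => (q : ℂ)) *
          (((appZ lam).map fun z => (z : ℂ))ᵀ * p.1 * ((appZ lam).map fun z => (z : ℂ))
            + (2 : ℂ) • (((appZ lam).map fun z => (z : ℂ))ᵀ * appZ p.2))).trace
          = ((m.map fun q => (q : ℂ)) *
              ((lam.map fun z => (z : ℂ))ᵀ * p.1 * (lam.map fun z => (z : ℂ))
                + (2 : ℂ) • ((lam.map fun z => (z : ℂ))ᵀ * p.2))).trace := by
        have hsub : (((appZ (lam.map fun z => (z : ℂ)))ᵀ *
              appZ (p.1 * (lam.map fun z => (z : ℂ))) +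
              (2 : ℂ) • ((appZ (lam.map fun z => (z : ℂ)))ᵀ * appZ p.2))).submatrix
                Fin.castSucc Fin.castSucc
            = (lam.map fun z => (z : ℂ))ᵀ * p.1 * (lam.map fun z => (z : ℂ))
              + (2 : ℂ) • ((lam.map fun z => (z : ℂ))ᵀ * p.2) := by
          ext a b
          have h1 := congrFun (congrFun (submatrix_appZT_mul_appZ
            (lam.map fun z => (z : ℂ)) (p.1 * (lam.map fun z => (z : ℂ)))) a) b
          have h2 := congrFun (congrFun (submatrix_appZT_mul_appZ
            (lam.map fun z => (z : ℂ)) p.2) a) b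
          simp only [Matrix.submatrix_apply] at h1 h2
          simp only [Matrix.submatrix_apply, Matrix.add_apply, Matrix.smul_apply, h1, h2,
            Matrix.mul_assoc]
        rw [appZ_map lam _ (by norm_num)]
        rw [Matrix.mul_assoc _ p.1, mul_appZ p.1]
        rw [extSq_map m _ (by norm_num), trace_extSq_mul, hsub]
      rw [etr] at key
      exact key
    · -- support of the Fourier coefficients
      rintro ⟨n, r⟩ hne
      have hne' : c (extendByZero h l2 (blkQ h (l2 + 1) n r m)) ≠ 0 := hne
      obtain ⟨hhi, hpsd⟩ := hsupp _ hne'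
      have e := extendByZero_submatrix h l2 (blkQ h (l2 + 1) n r m)
      exact ⟨e ▸ halfint_restrict _ hhi, e ▸ psd_restrict _ hpsd⟩
    · -- Fourier expansion
      intro p hp
      have key := φ.expansion (p.1, appZ p.2) hp
      have hinj : Function.Injective (fun nr : MatQ h × MatRQ h (l2 + 1) =>
          ((nr.1, appZ nr.2) : MatQ h × MatRQ h (l2 + 2))) := by
        rintro ⟨n1, r1⟩ ⟨n2, r2⟩ hxy
        simp only [Prod.mk.injEq] at hxy
        exact Prod.ext hxy.1 (appZ_injective hxy.2)
      have hzero : ∀ x ∉ Set.range (fun nr : MatQ h × MatRQ h (l2 + 1) =>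
          ((nr.1, appZ nr.2) : MatQ h × MatRQ h (l2 + 2))),
          φ.coeff x * Complex.exp (2 * (Real.pi : ℂ) * Complex.I *
            (((x.1.map fun q => (q : ℂ)) * p.1).trace
              + ((x.2.map fun q => (q : ℂ))ᵀ * appZ p.2).trace)) = 0 := by
        rintro ⟨n, R⟩ hx
        by_cases hR : ∃ i, R i (Fin.last (l2 + 1)) ≠ 0
        · rw [hvan (n, R) hR, zero_mul]
        · exfalso
          apply hx
          push_neg at hR
          refine ⟨(n, R.submatrix id Fin.castSucc), ?_⟩
          simp only [Prod.mk.injEq]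
          refine ⟨trivial, ?_⟩
          ext i j
          by_cases hj : (j : ℕ) < l2 + 1
          · have : j = Fin.castSucc (⟨j.1, hj⟩ : Fin (l2 + 1)) := Fin.ext rfl
            rw [this, appZ_castSucc, Matrix.submatrix_apply]
            rfl
          · have : j = Fin.last (l2 + 1) := by
              apply Fin.ext; simp only [Fin.val_last]; omega
            rw [this, appZ_last]
            exact (hR i).symm
      rw [← Function.Injective.hasSum_iff hinj hzero] at key
      have hfun : ((fun nr : MatQ h × MatRQ h (l2 + 2) => φ.coeff nr *
            Complex.exp (2 * (Real.pi : ℂ) * Complex.I *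
              (((nr.1.map fun q => (q : ℂ)) * p.1).trace
                + ((nr.2.map fun q => (q : ℂ))ᵀ * appZ p.2).trace))) ∘
            (fun nr : MatQ h × MatRQ h (l2 + 1) => ((nr.1, appZ nr.2) : _)))
          = fun nr : MatQ h × MatRQ h (l2 + 1) =>
              sliceCoeff h (l2 + 1) (fun t' => c (extendByZero h l2 t')) m nr *
              Complex.exp (2 * (Real.pi : ℂ) * Complex.I *
                (((nr.1.map fun q => (q : ℂ)) * p.1).trace
                  + ((nr.2.map fun q => (q : ℂ))ᵀ * p.2).trace)) := by
        funext nr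
        simp only [Function.comp]
        rw [hco nr.1 nr.2]
        rw [appZ_map _ _ (by norm_num), trace_appZT_mul_appZ]
        rfl
      rw [hfun] at key
      exact key

end
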